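/- Let N ≥ 2 be a natural number, M_N the IAM matrix, D = diag(−1, 1), and k ≥ 1 a natural number. Then the ℓ² operator norm of the difference of k-fold Kronecker powers satisfies ‖M_N^{⊗k} − D^{⊗k}‖ ≤ 2k/√N. (This expresses that the cubic IAM structure C_k is approximated by the composition of reflections D^{⊗k} up to O(1/√N) in operator norm.) -/
import Mathlib

open Matrix

/-- The 2×2 inversion-about-the-mean matrix. -/
noncomputable def IAMM (N : ℕ) : Matrix (Fin 2) (Fin 2) ℝ :=
  !![-(1 - 2 / (N : ℝ)), 2 * Real.sqrt ((N : ℝ) - 1) / (N : ℝ);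
     2 * Real.sqrt ((N : ℝ) - 1) / (N : ℝ), 1 - 2 / (N : ℝ)]

/-- The `k`-fold Kronecker power of a 2×2 matrix, indexed by `Fin k → Fin 2`. -/
noncomputable def kronPow (A : Matrix (Fin 2) (Fin 2) ℝ) (k : ℕ) :
    Matrix (Fin k → Fin 2) (Fin k → Fin 2) ℝ :=
  fun i j => ∏ t : Fin k, A (i t) (j t)

/-- The ℓ² operator norm of a square real matrix. -/
noncomputable def l2OpNorm {n : Type*} [Fintype n] [DecidableEq n]
    (M : Matrix n n ℝ) : ℝ :=
  ‖Matrix.toEuclideanCLM (𝕜 := ℝ) M‖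

/-! ### Auxiliary definitions and lemmas -/

/-- Slot-wise tensor (Kronecker) product of a family of 2×2 matrices. -/
noncomputable def kronFam {k : ℕ} (A : Fin k → Matrix (Fin 2) (Fin 2) ℝ) :
    Matrix (Fin k → Fin 2) (Fin k → Fin 2) ℝ :=
  fun i j => ∏ t, A t (i t) (j t)

lemma kronFam_mul {k : ℕ} (A B : Fin k → Matrix (Fin 2) (Fin 2) ℝ) :
    kronFam A * kronFam B = kronFam (fun t => A t * B t) := by
  ext i j
  simp only [Matrix.mul_apply, kronFam]
  rw [Fintype.prod_sum (fun t b => A t (i t) b * B t b (j t))]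
  exact Finset.sum_congr rfl fun m _ => (Finset.prod_mul_distrib).symm

lemma kronFam_one {k : ℕ} : kronFam (fun _ : Fin k => (1 : Matrix (Fin 2) (Fin 2) ℝ)) = 1 := by
  ext i j
  by_cases h : i = j
  · subst h; simp [kronFam, Matrix.one_apply]
  · rw [kronFam, Matrix.one_apply_ne h]
    obtain ⟨t, ht⟩ := Function.ne_iff.mp h
    exact Finset.prod_eq_zero (Finset.mem_univ t) (Matrix.one_apply_ne ht)

lemma kronFam_transpose {k : ℕ} (A : Fin k → Matrix (Fin 2) (Fin 2) ℝ) :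
    (kronFam A)ᵀ = kronFam (fun t => (A t)ᵀ) := rfl

lemma kronFam_orth {k : ℕ} (A : Fin k → Matrix (Fin 2) (Fin 2) ℝ)
    (h : ∀ t, (A t)ᵀ * A t = 1) : (kronFam A)ᵀ * kronFam A = 1 := by
  rw [kronFam_transpose, kronFam_mul]
  have : (fun t => (A t)ᵀ * A t) = fun _ : Fin k => (1 : Matrix (Fin 2) (Fin 2) ℝ) :=
    funext h
  rw [this, kronFam_one]

lemma clm_norm_le_one_of_orth {n : Type*} [Fintype n] [DecidableEq n]
    (A : Matrix n n ℝ) (h : Aᵀ * A = 1) :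
    ‖Matrix.toEuclideanCLM (𝕜 := ℝ) A‖ ≤ 1 := by
  set a := Matrix.toEuclideanCLM (𝕜 := ℝ) A with ha
  have h2 : star a * a = 1 := by
    rw [ha, ← map_star, ← _root_.map_mul, Matrix.star_eq_conjTranspose,
      Matrix.conjTranspose_eq_transpose_of_trivial, h, _root_.map_one]
  have h3 : ‖star a * a‖ = ‖a‖ * ‖a‖ := CStarRing.norm_star_mul_self (x := a)
  rw [h2] at h3
  have h4 : ‖(1 : EuclideanSpace ℝ n →L[ℝ] EuclideanSpace ℝ n)‖ ≤ 1 :=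
    ContinuousLinearMap.norm_id_le
  nlinarith [norm_nonneg a]

/-- The diagonal reflection matrix. -/
noncomputable def Dmat : Matrix (Fin 2) (Fin 2) ℝ := !![(-1 : ℝ), 0; 0, 1]

/-- The normalized difference `(√N/2)(M_N − D)`, an orthogonal matrix. -/
noncomputable def Umat (N : ℕ) : Matrix (Fin 2) (Fin 2) ℝ :=
  (Real.sqrt N / 2) • (IAMM N - Dmat)

lemma IAMM_orth (N : ℕ) (hN : 2 ≤ N) : (IAMM N)ᵀ * IAMM N = 1 := by
  have hN2 : (2 : ℝ) ≤ (N : ℝ) := by exact_mod_cast hN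
  have hN0 : (N : ℝ) ≠ 0 := by positivity
  have hs : Real.sqrt ((N : ℝ) - 1) ^ 2 = (N : ℝ) - 1 :=
    Real.sq_sqrt (by linarith)
  ext i j
  fin_cases i <;> fin_cases j <;>
    simp [IAMM, Matrix.mul_apply, Fin.sum_univ_two, Matrix.one_apply,
      Matrix.transpose_apply, Matrix.vecHead, Matrix.vecTail] <;>
    field_simp <;> nlinarith [hs]

lemma Dmat_orth : Dmatᵀ * Dmat = 1 := by
  ext i j
  fin_cases i <;> fin_cases j <;>
    simp [Dmat, Matrix.mul_apply, Fin.sum_univ_two, Matrix.one_apply,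
      Matrix.transpose_apply, Matrix.vecHead, Matrix.vecTail]

lemma Umat_orth (N : ℕ) (hN : 2 ≤ N) : (Umat N)ᵀ * Umat N = 1 := by
  have hN2 : (2 : ℝ) ≤ (N : ℝ) := by exact_mod_cast hN
  have hN0 : (N : ℝ) ≠ 0 := by positivity
  have hs : Real.sqrt ((N : ℝ) - 1) ^ 2 = (N : ℝ) - 1 :=
    Real.sq_sqrt (by linarith)
  have hsN : Real.sqrt (N : ℝ) ^ 2 = (N : ℝ) := Real.sq_sqrt (by linarith)
  have hprod : (Real.sqrt (N : ℝ) * Real.sqrt ((N : ℝ) - 1)) ^ 2 = (N : ℝ) * ((N : ℝ) - 1) := by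
    rw [mul_pow, hs, hsN]
  ext i j
  fin_cases i <;> fin_cases j <;>
    simp [Umat, IAMM, Dmat, Matrix.mul_apply, Fin.sum_univ_two, Matrix.one_apply,
      Matrix.transpose_apply, Matrix.vecHead, Matrix.vecTail] <;>
    field_simp <;> nlinarith [hs, hsN, hprod]

lemma IAMM_sub_Dmat (N : ℕ) (hN : 2 ≤ N) :
    IAMM N - Dmat = (2 / Real.sqrt N) • Umat N := by
  have hN2 : (2 : ℝ) ≤ (N : ℝ) := by exact_mod_cast hN
  have hsN : Real.sqrt (N : ℝ) ≠ 0 := by positivity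
  rw [Umat, smul_smul]
  have : 2 / Real.sqrt (N : ℝ) * (Real.sqrt (N : ℝ) / 2) = 1 := by
    field_simp
  rw [this, one_smul]

/-- The hybrid-step identity. -/
lemma hybrid_step (N k j : ℕ) (hN : 2 ≤ N) (hj : j < k) :
    kronFam (fun t : Fin k => if (t : ℕ) < j + 1 then IAMM N else Dmat)
      - kronFam (fun t : Fin k => if (t : ℕ) < j then IAMM N else Dmat)
    = (2 / Real.sqrt N) •
      (kronFam (fun t : Fin k => if (t : ℕ) < j then IAMM N else 1) *
       kronFam (fun t : Fin k => if t = ⟨j, hj⟩ then Umat N else 1) *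
       kronFam (fun t : Fin k => if j < (t : ℕ) then Dmat else 1)) := by
  rw [kronFam_mul, kronFam_mul]
  have hABC : (fun t : Fin k =>
        ((if (t : ℕ) < j then IAMM N else 1) * (if t = ⟨j, hj⟩ then Umat N else 1)) *
          (if j < (t : ℕ) then Dmat else 1))
      = fun t : Fin k => if t = ⟨j, hj⟩ then Umat N else
          if (t : ℕ) < j then IAMM N else Dmat := by
    funext t
    rcases lt_trichotomy (t : ℕ) j with h | h | h
    · have ht : t ≠ ⟨j, hj⟩ := by
        intro e; rw [Fin.ext_iff] at e; simp at e; omega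
      simp [h, ht, not_lt_of_gt h, Nat.lt_asymm h]
    · have ht : t = ⟨j, hj⟩ := by rw [Fin.ext_iff]; simpa using h
      simp [ht, lt_irrefl]
    · have ht : t ≠ ⟨j, hj⟩ := by
        intro e; rw [Fin.ext_iff] at e; simp at e; omega
      simp [ht, h, not_lt_of_gt h]
  rw [hABC]
  ext i i'
  set t0 : Fin k := ⟨j, hj⟩ with ht0
  have hM : IAMM N (i t0) (i' t0) - Dmat (i t0) (i' t0)
      = (2 / Real.sqrt N) * Umat N (i t0) (i' t0) := by
    have := congrFun (congrFun (IAMM_sub_Dmat N hN) (i t0)) (i' t0)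
    simpa [Matrix.sub_apply] using this
  simp only [Matrix.sub_apply, Matrix.smul_apply, kronFam, smul_eq_mul]
  rw [← Finset.mul_prod_erase Finset.univ _ (Finset.mem_univ t0),
      ← Finset.mul_prod_erase Finset.univ _ (Finset.mem_univ t0),
      ← Finset.mul_prod_erase Finset.univ _ (Finset.mem_univ t0)]
  have hval : (t0 : ℕ) = j := rfl
  have e1 : ∀ t ∈ Finset.univ.erase t0,
      (if (t : ℕ) < j + 1 then IAMM N else Dmat) (i t) (i' t)
        = (if (t : ℕ) < j then IAMM N else Dmat) (i t) (i' t) := by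
    intro t ht
    have htne : t ≠ t0 := (Finset.mem_erase.mp ht).1
    have : (t : ℕ) ≠ j := by
      intro e; exact htne (by rw [Fin.ext_iff]; exact e)
    by_cases h : (t : ℕ) < j
    · rw [if_pos (by omega), if_pos h]
    · rw [if_neg (by omega), if_neg h]
  have e2 : ∀ t ∈ Finset.univ.erase t0,
      (if t = t0 then Umat N else if (t : ℕ) < j then IAMM N else Dmat) (i t) (i' t)
        = (if (t : ℕ) < j then IAMM N else Dmat) (i t) (i' t) := by
    intro t ht
    have htne : t ≠ t0 := (Finset.mem_erase.mp ht).1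
    rw [if_neg htne]
  rw [Finset.prod_congr rfl e1, Finset.prod_congr rfl e2]
  rw [if_pos (show (t0 : ℕ) < j + 1 by omega), if_neg (show ¬ (t0 : ℕ) < j by omega),
      if_pos rfl]
  rw [← sub_mul, hM]
  ring

lemma norm_mul3_le_one {E : Type*} [NormedRing E] (a b c : E)
    (h1 : ‖a‖ ≤ 1) (h2 : ‖b‖ ≤ 1) (h3 : ‖c‖ ≤ 1) : ‖a * b * c‖ ≤ 1 := by
  calc ‖a * b * c‖ ≤ ‖a * b‖ * ‖c‖ := norm_mul_le _ _
    _ ≤ (‖a‖ * ‖b‖) * ‖c‖ := mul_le_mul_of_nonneg_right (norm_mul_le _ _) (norm_nonneg _)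
    _ ≤ 1 := mul_le_one₀ (mul_le_one₀ h1 (norm_nonneg _) h2) (norm_nonneg _) h3

set_option maxHeartbeats 1000000 in
set_option synthInstance.maxHeartbeats 200000 in
theorem cubic_iam_opNorm_approx (N : ℕ) (hN : 2 ≤ N) (k : ℕ) (hk : 1 ≤ k) :
    l2OpNorm (kronPow (IAMM N) k - kronPow !![(-1 : ℝ), 0; 0, 1] k)
      ≤ 2 * k / Real.sqrt N := by
  classical
  have hN2 : (2 : ℝ) ≤ (N : ℝ) := by exact_mod_cast hN
  have hsN : 0 < Real.sqrt (N : ℝ) := Real.sqrt_pos.mpr (by linarith)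
  set F : ℕ → Matrix (Fin k → Fin 2) (Fin k → Fin 2) ℝ :=
    fun j => kronFam (fun t : Fin k => if (t : ℕ) < j then IAMM N else Dmat) with hF
  have hFk : F k = kronPow (IAMM N) k := by
    show kronFam _ = kronPow (IAMM N) k
    unfold kronFam kronPow
    funext i j
    exact Finset.prod_congr rfl fun t _ => by simp [t.isLt]
  have hF0 : F 0 = kronPow !![(-1 : ℝ), 0; 0, 1] k := by
    show kronFam _ = kronPow _ k
    unfold kronFam kronPow
    funext i j
    exact Finset.prod_congr rfl fun t _ => by simp [Dmat]
  have htel : kronPow (IAMM N) k - kronPow !![(-1 : ℝ), 0; 0, 1] k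
      = ∑ j ∈ Finset.range k, (F (j + 1) - F j) := by
    rw [Finset.sum_range_sub F k, hFk, hF0]
  rw [l2OpNorm, htel, map_sum]
  calc ‖∑ j ∈ Finset.range k, Matrix.toEuclideanCLM (𝕜 := ℝ) (F (j + 1) - F j)‖
      ≤ ∑ j ∈ Finset.range k, ‖Matrix.toEuclideanCLM (𝕜 := ℝ) (F (j + 1) - F j)‖ :=
        norm_sum_le _ _
    _ ≤ ∑ j ∈ Finset.range k, 2 / Real.sqrt N := by
        apply Finset.sum_le_sum
        intro j hj
        have hjk : j < k := Finset.mem_range.mp hj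
        rw [hF]
        rw [hybrid_step N k j hN hjk, _root_.map_smul, _root_.map_mul, _root_.map_mul]
        have h1 := clm_norm_le_one_of_orth _
          (kronFam_orth (fun t : Fin k => if (t : ℕ) < j then IAMM N else 1)
            (fun t => by by_cases h : (t : ℕ) < j <;>
              simp [h, IAMM_orth N hN, Matrix.transpose_one]))
        have h2 := clm_norm_le_one_of_orth _
          (kronFam_orth (fun t : Fin k => if t = ⟨j, hjk⟩ then Umat N else 1)
            (fun t => by by_cases h : t = ⟨j, hjk⟩ <;>
              simp [h, Umat_orth N hN, Matrix.transpose_one]))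
        have h3 := clm_norm_le_one_of_orth _
          (kronFam_orth (fun t : Fin k => if j < (t : ℕ) then Dmat else 1)
            (fun t => by by_cases h : j < (t : ℕ) <;>
              simp [h, Dmat_orth, Matrix.transpose_one]))
        have hnn : ‖(2 / Real.sqrt (N : ℝ) : ℝ)‖ = 2 / Real.sqrt N := by
          rw [Real.norm_eq_abs, abs_of_nonneg (by positivity)]
        set a1 := Matrix.toEuclideanCLM (𝕜 := ℝ)
          (kronFam (fun t : Fin k => if (t : ℕ) < j then IAMM N else 1)) with ha1
        set a2 := Matrix.toEuclideanCLM (𝕜 := ℝ)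
          (kronFam (fun t : Fin k => if t = ⟨j, hjk⟩ then Umat N else 1)) with ha2
        set a3 := Matrix.toEuclideanCLM (𝕜 := ℝ)
          (kronFam (fun t : Fin k => if j < (t : ℕ) then Dmat else 1)) with ha3
        have hsm := norm_smul_le (2 / Real.sqrt (N : ℝ)) (a1 * a2 * a3)
        refine hsm.trans ?_
        have hb : ‖a1 * a2 * a3‖ ≤ 1 := norm_mul3_le_one a1 a2 a3 h1 h2 h3
        calc ‖(2 / Real.sqrt (N : ℝ) : ℝ)‖ * ‖a1 * a2 * a3‖
            ≤ ‖(2 / Real.sqrt (N : ℝ) : ℝ)‖ * 1 :=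
              mul_le_mul_of_nonneg_left hb (norm_nonneg _)
          _ = 2 / Real.sqrt N := by rw [mul_one, hnn]
    _ = 2 * k / Real.sqrt N := by
        rw [Finset.sum_const, Finset.card_range, nsmul_eq_mul]
        ring
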